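/- Let Ψ : D → Dⁿ₁ be a D-holomorphic function on a domain D ⊂ D satisfying Ψ′² = 0 and ‖Ψ′‖² < 0. Then x = Re Ψ defines a minimal time-like surface in ℝⁿ₁ parametrized by isothermal coordinates (u,v), t = u + jv. Conversely every minimal time-like surface in isothermal coordinates arises locally this way. -/

import Mathlib

noncomputable section

/-- The algebra of double numbers `D = {u + j v : j² = 1}`, modeled on `ℝ × ℝ`
(null-basis / idempotent coordinates), with the componentwise ring structure. -/
abbrev DNum : Type := ℝ × ℝ

namespace DNum

/-- The imaginary unit `j`, with `j * j = 1`. -/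
def j : DNum := (-1, 1)

/-- The embedding of `ℝ` into the double numbers. -/
def ofReal (u : ℝ) : DNum := (u, u)

/-- The double number `u + j v`. -/
def mk' (u v : ℝ) : DNum := ofReal u + j * ofReal v

/-- Conjugation `u + j v ↦ u - j v`. -/
def conj (t : DNum) : DNum := (t.2, t.1)

/-- The real part of a double number. -/
def re (t : DNum) : ℝ := (t.1 + t.2) / 2

/-- The imaginary part of a double number. -/
def im (t : DNum) : ℝ := (t.2 - t.1) / 2

/-- `q = (1 - j)/2`. -/
def q : DNum := (2⁻¹ : ℝ) • ((1 : DNum) - j)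

/-- `q̄ = (1 + j)/2`. -/
def qbar : DNum := (2⁻¹ : ℝ) • ((1 : DNum) + j)

/-- `|t|² = t·t̄ = u² - v²`. -/
def absSq (t : DNum) : ℝ := re (t * conj t)

/-- The set `D₊` of positive double numbers `a q + b q̄`, `a > 0`, `b > 0`. -/
def Dpos : Set DNum := {t | ∃ a b : ℝ, 0 < a ∧ 0 < b ∧ t = a • q + b • qbar}

/-- Directional (partial) derivative in direction `w`. -/
def pd {E : Type*} [NormedAddCommGroup E] [NormedSpace ℝ E]
    (w : ℝ × ℝ) (f : ℝ × ℝ → E) (p : ℝ × ℝ) : E := fderiv ℝ f p w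

/-- Partial derivative `∂/∂u`. -/
def pu {E : Type*} [NormedAddCommGroup E] [NormedSpace ℝ E]
    (f : ℝ × ℝ → E) : (ℝ × ℝ) → E := pd ((1 : ℝ), (0 : ℝ)) f

/-- Partial derivative `∂/∂v`. -/
def pv {E : Type*} [NormedAddCommGroup E] [NormedSpace ℝ E]
    (f : ℝ × ℝ → E) : (ℝ × ℝ) → E := pd ((0 : ℝ), (1 : ℝ)) f

/-- `∂f/∂t̄ = (1/2)(∂f/∂u - j ∂f/∂v)` for a `D`-valued function of `t = u + j v`. -/
def dbar (f : ℝ × ℝ → DNum) (p : ℝ × ℝ) : DNum := (2⁻¹ : ℝ) • (pu f p - j * pv f p)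

/-- `∂f/∂t = (1/2)(∂f/∂u + j ∂f/∂v)` for a `D`-valued function of `t = u + j v`. -/
def dt (f : ℝ × ℝ → DNum) (p : ℝ × ℝ) : DNum := (2⁻¹ : ℝ) • (pu f p + j * pv f p)

/-- The Minkowski signature `(-1, 1, …, 1)`. -/
def minkEta (m : ℕ) (i : Fin m) : ℝ := if (i : ℕ) = 0 then -1 else 1

variable {n : ℕ}

/-- The Minkowski scalar product on `ℝⁿ₁`. -/
def mink (a b : Fin n → ℝ) : ℝ := ∑ i, minkEta n i * (a i * b i)

/-- The `D`-bilinear extension of the Minkowski scalar product to `Dⁿ₁`. -/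
def minkD (A B : Fin n → DNum) : DNum := ∑ i, ofReal (minkEta n i) * (A i * B i)

/-- Componentwise conjugation on `Dⁿ₁`. -/
def conjV (A : Fin n → DNum) : Fin n → DNum := fun i => conj (A i)

/-- The (real) squared norm `‖A‖² = A·Ā` on `Dⁿ₁`. -/
def normSqV (A : Fin n → DNum) : ℝ := re (minkD A (conjV A))

/-- `∂/∂t̄` applied componentwise to a `Dⁿ₁`-valued function. -/
def dbarV (F : ℝ × ℝ → Fin n → DNum) (p : ℝ × ℝ) : Fin n → DNum :=
  fun i => dbar (fun z => F z i) p

/-- `∂/∂t` applied componentwise to a `Dⁿ₁`-valued function. -/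
def dtV (F : ℝ × ℝ → Fin n → DNum) (p : ℝ × ℝ) : Fin n → DNum :=
  fun i => dt (fun z => F z i) p

/-- Scalar multiplication of a `Dⁿ₁` vector by a double number. -/
def smulD (c : DNum) (A : Fin n → DNum) : Fin n → DNum := fun i => c * A i

/-- `x_u`. -/
def xu (x : ℝ × ℝ → Fin n → ℝ) : (ℝ × ℝ) → Fin n → ℝ := fun p => pu x p

/-- `x_v`. -/
def xv (x : ℝ × ℝ → Fin n → ℝ) : (ℝ × ℝ) → Fin n → ℝ := fun p => pv x p

/-- `Φ = x_u + j x_v`. -/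
def Phi (x : ℝ × ℝ → Fin n → ℝ) : (ℝ × ℝ) → Fin n → DNum :=
  fun p i => mk' (xu x p i) (xv x p i)

/-- `E = x_u²`. -/
def Efun (x : ℝ × ℝ → Fin n → ℝ) (p : ℝ × ℝ) : ℝ := mink (xu x p) (xu x p)

/-- `F = x_u · x_v`. -/
def Ffun (x : ℝ × ℝ → Fin n → ℝ) (p : ℝ × ℝ) : ℝ := mink (xu x p) (xv x p)

/-- `G = x_v²`. -/
def Gfun (x : ℝ × ℝ → Fin n → ℝ) (p : ℝ × ℝ) : ℝ := mink (xv x p) (xv x p)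

/-- Isothermal coordinates for a time-like surface, with the convention `E < 0`:
`E = -G < 0`, `F = 0`. -/
def Isoth (x : ℝ × ℝ → Fin n → ℝ) (p : ℝ × ℝ) : Prop :=
  Efun x p < 0 ∧ Gfun x p = - Efun x p ∧ Ffun x p = 0

/-- Orthogonal projection onto the normal space (valid in isothermal coordinates,
where `F = 0` and the tangent directions `x_u`, `x_v` are non-null). -/
def perp (x : ℝ × ℝ → Fin n → ℝ) (p : ℝ × ℝ) (w : Fin n → ℝ) : Fin n → ℝ :=
  w - (mink w (xu x p) / Efun x p) • xu x p - (mink w (xv x p) / Gfun x p) • xv x p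

/-- `σ(x_u, x_u) = (x_uu)^⊥`. -/
def sUU (x : ℝ × ℝ → Fin n → ℝ) (p : ℝ × ℝ) : Fin n → ℝ := perp x p (pu (xu x) p)

/-- `σ(x_u, x_v) = (x_uv)^⊥`. -/
def sUV (x : ℝ × ℝ → Fin n → ℝ) (p : ℝ × ℝ) : Fin n → ℝ := perp x p (pv (xu x) p)

/-- `σ(x_v, x_v) = (x_vv)^⊥`. -/
def sVV (x : ℝ × ℝ → Fin n → ℝ) (p : ℝ × ℝ) : Fin n → ℝ := perp x p (pv (xv x) p)

/-- The mean curvature vector `H = (1/2)(-σ(X₁,X₁) + σ(X₂,X₂))` expressed in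
isothermal coordinates: `H = (1/(2E))(σ(x_u,x_u) - σ(x_v,x_v))`. -/
def Hmean (x : ℝ × ℝ → Fin n → ℝ) (p : ℝ × ℝ) : Fin n → ℝ :=
  (1 / (2 * Efun x p)) • (sUU x p - sVV x p)

/-- The Gauss curvature of a minimal time-like surface in isothermal coordinates:
`K = -σ²(X₁,X₁) + σ²(X₁,X₂) = (-σ²(x_u,x_u) + σ²(x_u,x_v))/E²`. -/
def Kgauss (x : ℝ × ℝ → Fin n → ℝ) (p : ℝ × ℝ) : ℝ :=
  (-(mink (sUU x p) (sUU x p)) + mink (sUV x p) (sUV x p)) / (Efun x p) ^ 2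

/-- `Φ′ = ∂Φ/∂t`. -/
def PhiP (x : ℝ × ℝ → Fin n → ℝ) : (ℝ × ℝ) → Fin n → DNum := fun p => dtV (Phi x) p

/-- The normal projection `Φ′^⊥ = Φ′ - ((Φ′·Φ̄)/‖Φ‖²) Φ`. -/
def PhiPperp (x : ℝ × ℝ → Fin n → ℝ) (p : ℝ × ℝ) : Fin n → DNum :=
  fun i => PhiP x p i -
    (minkD (PhiP x p) (conjV (Phi x p)) * ofReal (normSqV (Phi x p))⁻¹) * Phi x p i

/-- `σ(x_u,x_u) + j σ(x_u,x_v)` (which equals `Φ′^⊥` on a minimal surface). -/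
def SigmaJ (x : ℝ × ℝ → Fin n → ℝ) (p : ℝ × ℝ) : Fin n → DNum :=
  fun i => mk' (sUU x p i) (sUV x p i)

/-- `σ(a x_u + b x_v, c x_u + d x_v)` by bilinearity. -/
def sigComb (x : ℝ × ℝ → Fin n → ℝ) (p : ℝ × ℝ) (a b c d : ℝ) : Fin n → ℝ :=
  (a * c) • sUU x p + (a * d + b * c) • sUV x p + (b * d) • sVV x p

/-- `(a x_u + b x_v, c x_u + d x_v)` is an orthonormal tangent frame with `X₁² = -1`. -/
def OrthFrame (x : ℝ × ℝ → Fin n → ℝ) (p : ℝ × ℝ) (a b c d : ℝ) : Prop :=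
  mink (a • xu x p + b • xv x p) (a • xu x p + b • xv x p) = -1 ∧
  mink (c • xu x p + d • xv x p) (c • xu x p + d • xv x p) = 1 ∧
  mink (a • xu x p + b • xv x p) (c • xu x p + d • xv x p) = 0

end DNum

namespace DNum

variable {n : ℕ}

lemma prod_mul (a b : DNum) : a * b = (a.1 * b.1, a.2 * b.2) := rfl

lemma j_mul (w : DNum) : j * w = (-w.1, w.2) := by
  cases w with
  | mk a b => simp [j, prod_mul]

lemma j_mul_j_mul (w : DNum) : j * (j * w) = w := by simp [j_mul]

lemma re_j_mul (w : DNum) : re (j * w) = im w := by simp [re, im, j_mul]; ring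

lemma im_j_mul (w : DNum) : im (j * w) = re w := by simp [re, im, j_mul]; ring

def reCLM : DNum →L[ℝ] ℝ :=
  (2 : ℝ)⁻¹ • (ContinuousLinearMap.fst ℝ ℝ ℝ + ContinuousLinearMap.snd ℝ ℝ ℝ)

@[simp] lemma reCLM_apply (w : DNum) : reCLM w = re w := by
  simp [reCLM, re, smul_eq_mul]; ring

def imCLM : DNum →L[ℝ] ℝ :=
  (2 : ℝ)⁻¹ • (ContinuousLinearMap.snd ℝ ℝ ℝ - ContinuousLinearMap.fst ℝ ℝ ℝ)

@[simp] lemma imCLM_apply (w : DNum) : imCLM w = im w := by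
  simp [imCLM, im, smul_eq_mul]; ring

def jCLM : DNum →L[ℝ] DNum :=
  (-ContinuousLinearMap.fst ℝ ℝ ℝ).prod (ContinuousLinearMap.snd ℝ ℝ ℝ)

@[simp] lemma jCLM_apply (w : DNum) : jCLM w = j * w := by
  simp [jCLM, j_mul]

def reV : (Fin n → DNum) →L[ℝ] (Fin n → ℝ) :=
  ContinuousLinearMap.pi fun i => reCLM.comp (ContinuousLinearMap.proj i)

@[simp] lemma reV_apply (A : Fin n → DNum) : reV A = fun i => re (A i) := by
  funext i; simp [reV]

def imV : (Fin n → DNum) →L[ℝ] (Fin n → ℝ) :=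
  ContinuousLinearMap.pi fun i => imCLM.comp (ContinuousLinearMap.proj i)

@[simp] lemma imV_apply (A : Fin n → DNum) : imV A = fun i => im (A i) := by
  funext i; simp [imV]

def jV : (Fin n → DNum) →L[ℝ] (Fin n → DNum) :=
  ContinuousLinearMap.pi fun i => jCLM.comp (ContinuousLinearMap.proj i)

@[simp] lemma jV_apply (A : Fin n → DNum) : jV A = fun i => j * A i := by
  funext i; simp [jV]

lemma reV_jV (A : Fin n → DNum) : reV (jV A) = imV A := by
  simp [re_j_mul]

lemma imV_jV (A : Fin n → DNum) : imV (jV A) = reV A := by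
  simp [im_j_mul]

end DNum
namespace DNum

section PD

variable {E F : Type*} [NormedAddCommGroup E] [NormedSpace ℝ E]
  [NormedAddCommGroup F] [NormedSpace ℝ F]
variable {f g : ℝ × ℝ → E} {p w : ℝ × ℝ}

lemma pd_clm (L : E →L[ℝ] F) (hf : DifferentiableAt ℝ f p) (w : ℝ × ℝ) :
    pd w (fun z => L (f z)) p = L (pd w f p) := by
  unfold pd
  rw [show (fun z => L (f z)) = (L ∘ f) from rfl,
    (L.hasFDerivAt.comp p hf.hasFDerivAt).fderiv, ContinuousLinearMap.comp_apply]

lemma pd_congr {f g : ℝ × ℝ → E} (h : f =ᶠ[nhds p] g) (w : ℝ × ℝ) :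
    pd w f p = pd w g p := by
  unfold pd; rw [Filter.EventuallyEq.fderiv_eq h]

lemma pd_eval {f : ℝ × ℝ → Fin n → E} (hf : DifferentiableAt ℝ f p) (w : ℝ × ℝ) (i : Fin n) :
    pd w (fun z => f z i) p = pd w f p i :=
  pd_clm (ContinuousLinearMap.proj i) hf w

lemma contDiffAt_pd {k : ℕ} (hf : ContDiffAt ℝ (k + 1 : ℕ) f p) (w : ℝ × ℝ) :
    ContDiffAt ℝ k (fun z => pd w f z) p := by
  have h1 : ContDiffAt ℝ k (fderiv ℝ f) p := hf.fderiv_right (by norm_cast)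
  exact h1.clm_apply contDiffAt_const

lemma differentiableAt_pd (hf : ContDiffAt ℝ (2 : ℕ) f p) (w : ℝ × ℝ) :
    DifferentiableAt ℝ (fun z => pd w f z) p :=
  ((contDiffAt_pd (k := 1) (by exact_mod_cast hf) w).differentiableAt (by norm_cast))

lemma pd_pd_comm (hf : ContDiffAt ℝ (2 : ℕ) f p) (w₁ w₂ : ℝ × ℝ) :
    pd w₁ (fun z => pd w₂ f z) p = pd w₂ (fun z => pd w₁ f z) p := by
  have hd : DifferentiableAt ℝ (fderiv ℝ f) p :=
    (hf.fderiv_right (m := 1) (by norm_cast)).differentiableAt (by norm_cast)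
  have h1 : ∀ v u : ℝ × ℝ, pd v (fun z => pd u f z) p = fderiv ℝ (fderiv ℝ f) p v u := by
    intro v u
    have := pd_clm (ContinuousLinearMap.apply ℝ E u) hd v
    simpa [pd] using this
  rw [h1, h1]
  exact (hf.isSymmSndFDerivAt (by simp)) w₁ w₂

lemma pd_add (hf : DifferentiableAt ℝ f p) (hg : DifferentiableAt ℝ g p) (w : ℝ × ℝ) :
    pd w (fun z => f z + g z) p = pd w f p + pd w g p := by
  unfold pd
  rw [(hf.hasFDerivAt.fun_add hg.hasFDerivAt).fderiv]; rfl

lemma pd_sub (hf : DifferentiableAt ℝ f p) (hg : DifferentiableAt ℝ g p) (w : ℝ × ℝ) :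
    pd w (fun z => f z - g z) p = pd w f p - pd w g p := by
  unfold pd
  rw [(hf.hasFDerivAt.fun_sub hg.hasFDerivAt).fderiv]; rfl

lemma pd_const_smul (c : ℝ) (hf : DifferentiableAt ℝ f p) (w : ℝ × ℝ) :
    pd w (fun z => c • f z) p = c • pd w f p := by
  unfold pd
  rw [(hf.hasFDerivAt.fun_const_smul c).fderiv]; rfl

lemma pd_dir_add (hf : DifferentiableAt ℝ f p) (w₁ w₂ : ℝ × ℝ) :
    pd (w₁ + w₂) f p = pd w₁ f p + pd w₂ f p := by
  unfold pd; exact map_add _ _ _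

lemma pd_mul {f g : ℝ × ℝ → ℝ} (hf : DifferentiableAt ℝ f p) (hg : DifferentiableAt ℝ g p)
    (w : ℝ × ℝ) :
    pd w (fun z => f z * g z) p = pd w f p * g p + f p * pd w g p := by
  unfold pd
  rw [(hf.hasFDerivAt.fun_mul hg.hasFDerivAt).fderiv]
  simp [smul_eq_mul]; ring

lemma pd_sum {ι : Type*} (s : Finset ι) {F : ι → ℝ × ℝ → E}
    (hF : ∀ i ∈ s, DifferentiableAt ℝ (F i) p) (w : ℝ × ℝ) :
    pd w (fun z => ∑ i ∈ s, F i z) p = ∑ i ∈ s, pd w (F i) p := by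
  unfold pd
  rw [fderiv_fun_sum hF]
  simp

end PD

end DNum
namespace DNum

variable {n : ℕ}

lemma mink_comm (a b : Fin n → ℝ) : mink a b = mink b a := by
  unfold mink
  exact Finset.sum_congr rfl fun i _ => by ring

lemma mink_lin (a b : Fin n → ℝ) (α β γ δ : ℝ) :
    mink (fun i => α * a i + β * b i) (fun i => γ * a i + δ * b i) =
      α * γ * mink a a + α * δ * mink a b + β * γ * mink b a + β * δ * mink b b := by
  unfold mink
  simp only [Finset.mul_sum, ← Finset.sum_add_distrib]
  exact Finset.sum_congr rfl fun i _ => by ring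

lemma minkD_comps (A B : Fin n → DNum) :
    minkD A B = (mink (fun i => (A i).1) (fun i => (B i).1),
      mink (fun i => (A i).2) (fun i => (B i).2)) := by
  unfold minkD mink
  rw [Prod.ext_iff]
  constructor
  · rw [Prod.fst_sum]
    exact Finset.sum_congr rfl fun i _ => by simp [ofReal, prod_mul]
  · rw [Prod.snd_sum]
    exact Finset.sum_congr rfl fun i _ => by simp [ofReal, prod_mul]

lemma normSqV_eq (A : Fin n → DNum) :
    normSqV A = mink (fun i => (A i).1) (fun i => (A i).2) := by
  unfold normSqV conjV
  rw [minkD_comps]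
  simp only [conj]
  rw [re]
  simp only []
  rw [mink_comm (fun i => (A i).2) (fun i => (A i).1)]
  ring

end DNum
namespace DNum

variable {n : ℕ}

section PD2

variable {E : Type*} [NormedAddCommGroup E] [NormedSpace ℝ E]
variable {f g : ℝ × ℝ → E} {p w : ℝ × ℝ}

lemma pd_const (c : E) (w : ℝ × ℝ) : pd w (fun _ : ℝ × ℝ => c) p = 0 := by
  unfold pd; rw [fderiv_fun_const]; rfl

lemma pd_dir_smul (c : ℝ) (w : ℝ × ℝ) : pd (c • w) f p = c • pd w f p := by
  unfold pd; exact map_smul _ _ _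

lemma pd_const_mul {h : ℝ × ℝ → ℝ} (c : ℝ) (hh : DifferentiableAt ℝ h p) (w : ℝ × ℝ) :
    pd w (fun z => c * h z) p = c * pd w h p := by
  simpa [smul_eq_mul] using pd_const_smul c hh w

lemma pd_prod {F : Type*} [NormedAddCommGroup F] [NormedSpace ℝ F] {g : ℝ × ℝ → F}
    (hf : DifferentiableAt ℝ f p) (hg : DifferentiableAt ℝ g p) (w : ℝ × ℝ) :
    pd w (fun z => (f z, g z)) p = (pd w f p, pd w g p) := by
  unfold pd
  rw [(hf.hasFDerivAt.prodMk hg.hasFDerivAt).fderiv]; rfl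

end PD2

lemma pd_mink {f g : ℝ × ℝ → Fin n → ℝ} {p : ℝ × ℝ} (hf : DifferentiableAt ℝ f p)
    (hg : DifferentiableAt ℝ g p) (w : ℝ × ℝ) :
    pd w (fun z => mink (f z) (g z)) p = mink (pd w f p) (g p) + mink (f p) (pd w g p) := by
  have hfe : ∀ i : Fin n, DifferentiableAt ℝ (fun z => f z i) p := fun i =>
    ((ContinuousLinearMap.proj (R := ℝ) (φ := fun _ : Fin n => ℝ) i).hasFDerivAt.comp p
      hf.hasFDerivAt).differentiableAt
  have hge : ∀ i : Fin n, DifferentiableAt ℝ (fun z => g z i) p := fun i =>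
    ((ContinuousLinearMap.proj (R := ℝ) (φ := fun _ : Fin n => ℝ) i).hasFDerivAt.comp p
      hg.hasFDerivAt).differentiableAt
  have hterm : ∀ i ∈ Finset.univ, DifferentiableAt ℝ
      (fun z => minkEta n i * (f z i * g z i)) p := fun i _ =>
    ((hfe i).mul (hge i)).const_mul _
  unfold mink
  rw [pd_sum Finset.univ hterm w, ← Finset.sum_add_distrib]
  refine Finset.sum_congr rfl fun i _ => ?_
  rw [pd_const_mul _ ((hfe i).fun_mul (hge i)) w, pd_mul (hfe i) (hge i) w,
    pd_eval hf w i, pd_eval hg w i]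
  ring

end DNum
namespace DNum

variable {n : ℕ}

lemma differentiableAt_mink {f g : ℝ × ℝ → Fin n → ℝ} {p : ℝ × ℝ}
    (hf : DifferentiableAt ℝ f p) (hg : DifferentiableAt ℝ g p) :
    DifferentiableAt ℝ (fun z => mink (f z) (g z)) p := by
  have hfe : ∀ i : Fin n, DifferentiableAt ℝ (fun z => f z i) p := fun i =>
    ((ContinuousLinearMap.proj (R := ℝ) (φ := fun _ : Fin n => ℝ) i).hasFDerivAt.comp p
      hf.hasFDerivAt).differentiableAt
  have hge : ∀ i : Fin n, DifferentiableAt ℝ (fun z => g z i) p := fun i =>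
    ((ContinuousLinearMap.proj (R := ℝ) (φ := fun _ : Fin n => ℝ) i).hasFDerivAt.comp p
      hg.hasFDerivAt).differentiableAt
  unfold mink
  exact DifferentiableAt.fun_sum fun i _ => ((hfe i).fun_mul (hge i)).const_mul _

lemma wave_eq (U : Set (ℝ × ℝ)) (hU : IsOpen U) (x : ℝ × ℝ → Fin n → ℝ)
    (hx : ContDiffOn ℝ (⊤ : ℕ∞) x U)
    (hiso : ∀ p ∈ U, Isoth x p) (hmin : ∀ p ∈ U, Hmean x p = 0) :
    ∀ p ∈ U, pd ((1:ℝ),(0:ℝ)) (fun z => pd ((1:ℝ),(0:ℝ)) x z) p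
      = pd ((0:ℝ),(1:ℝ)) (fun z => pd ((0:ℝ),(1:ℝ)) x z) p := by
  intro p hp
  have hC : ∀ z ∈ U, ContDiffAt ℝ (3 : ℕ) x z := fun z hz =>
    (hx.of_le (by exact WithTop.coe_le_coe.mpr le_top)).contDiffAt (hU.mem_nhds hz)
  have hC2 : ContDiffAt ℝ (2 : ℕ) x p := (hC p hp).of_le (by norm_cast)
  have hDu : DifferentiableAt ℝ (fun z' => pd ((1:ℝ),(0:ℝ)) x z') p :=
    differentiableAt_pd hC2 _
  have hDv : DifferentiableAt ℝ (fun z' => pd ((0:ℝ),(1:ℝ)) x z') p :=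
    differentiableAt_pd hC2 _
  set Xu : Fin n → ℝ := pd ((1:ℝ),(0:ℝ)) x p with hXu
  set Xv : Fin n → ℝ := pd ((0:ℝ),(1:ℝ)) x p with hXv
  set Xuu : Fin n → ℝ := pd ((1:ℝ),(0:ℝ)) (fun z => pd ((1:ℝ),(0:ℝ)) x z) p with hXuu
  set Xvv : Fin n → ℝ := pd ((0:ℝ),(1:ℝ)) (fun z => pd ((0:ℝ),(1:ℝ)) x z) p with hXvv
  set Xuv : Fin n → ℝ := pd ((1:ℝ),(0:ℝ)) (fun z => pd ((0:ℝ),(1:ℝ)) x z) p with hXuv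
  have hswap : pd ((0:ℝ),(1:ℝ)) (fun z => pd ((1:ℝ),(0:ℝ)) x z) p = Xuv :=
    pd_pd_comm hC2 _ _
  have hErw : Efun x = fun z => mink (pd ((1:ℝ),(0:ℝ)) x z) (pd ((1:ℝ),(0:ℝ)) x z) := rfl
  have hGrw : Gfun x = fun z => mink (pd ((0:ℝ),(1:ℝ)) x z) (pd ((0:ℝ),(1:ℝ)) x z) := rfl
  have hFrw : Ffun x = fun z => mink (pd ((1:ℝ),(0:ℝ)) x z) (pd ((0:ℝ),(1:ℝ)) x z) := rfl
  have hdE : DifferentiableAt ℝ (Efun x) p := by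
    rw [hErw]; exact differentiableAt_mink hDu hDu
  have hdG : DifferentiableAt ℝ (Gfun x) p := by
    rw [hGrw]; exact differentiableAt_mink hDv hDv
  have hEG : (fun z => Efun x z + Gfun x z) =ᶠ[nhds p] (fun _ => (0:ℝ)) :=
    Filter.eventuallyEq_of_mem (hU.mem_nhds hp) fun z hz => by
      show Efun x z + Gfun x z = 0
      rw [(hiso z hz).2.1]; ring
  have hFf : Ffun x =ᶠ[nhds p] (fun _ => (0:ℝ)) :=
    Filter.eventuallyEq_of_mem (hU.mem_nhds hp) fun z hz => (hiso z hz).2.2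
  -- u-derivative of E+G
  have h0u : mink Xuu Xu + mink Xuv Xv = 0 := by
    have h0 : pd ((1:ℝ),(0:ℝ)) (fun z => Efun x z + Gfun x z) p = 0 := by
      rw [pd_congr hEG, pd_const]
    rw [pd_add hdE hdG] at h0
    rw [hErw, hGrw] at h0
    rw [pd_mink hDu hDu, pd_mink hDv hDv] at h0
    rw [mink_comm Xu Xuu, mink_comm Xv (pd ((1:ℝ),(0:ℝ)) (fun z => pd ((0:ℝ),(1:ℝ)) x z) p)]
      at h0
    linarith
  -- v-derivative of E+G
  have h0v : mink Xuv Xu + mink Xvv Xv = 0 := by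
    have h0 : pd ((0:ℝ),(1:ℝ)) (fun z => Efun x z + Gfun x z) p = 0 := by
      rw [pd_congr hEG, pd_const]
    rw [pd_add hdE hdG] at h0
    rw [hErw, hGrw] at h0
    rw [pd_mink hDu hDu, pd_mink hDv hDv] at h0
    rw [hswap] at h0
    rw [mink_comm Xu Xuv, mink_comm Xv Xvv] at h0
    linarith
  -- u-derivative of F
  have hFu : mink Xuu Xv + mink Xu Xuv = 0 := by
    have h0 : pd ((1:ℝ),(0:ℝ)) (Ffun x) p = 0 := by rw [pd_congr hFf, pd_const]
    rw [hFrw, pd_mink hDu hDv] at h0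
    exact h0
  -- v-derivative of F
  have hFv : mink Xuv Xv + mink Xu Xvv = 0 := by
    have h0 : pd ((0:ℝ),(1:ℝ)) (Ffun x) p = 0 := by rw [pd_congr hFf, pd_const]
    rw [hFrw, pd_mink hDu hDv] at h0
    rw [hswap] at h0
    exact h0
  -- minimality
  have hEneg : Efun x p < 0 := (hiso p hp).1
  have hmin' := hmin p hp
  unfold Hmean at hmin'
  rw [smul_eq_zero] at hmin'
  have hsne : (1 / (2 * Efun x p)) ≠ 0 := by
    intro h
    rw [div_eq_zero_iff] at h
    rcases h with h | h
    · norm_num at h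
    · nlinarith
  have hσ : sUU x p - sVV x p = 0 := hmin'.resolve_left hsne
  have hsUU : sUU x p = Xuu - (mink Xuu Xu / Efun x p) • Xu
      - (mink Xuu Xv / Gfun x p) • Xv := rfl
  have hsVV : sVV x p = Xvv - (mink Xvv Xu / Efun x p) • Xu
      - (mink Xvv Xv / Gfun x p) • Xv := rfl
  have e1 : mink Xuu Xu = mink Xvv Xu := by
    have c1 : mink Xvv Xu = mink Xu Xvv := mink_comm _ _
    linarith
  have e2 : mink Xuu Xv = mink Xvv Xv := by
    have c1 : mink Xu Xuv = mink Xuv Xu := mink_comm _ _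
    linarith
  rw [hsUU, hsVV, e1, e2] at hσ
  have : Xuu - Xvv = 0 := by
    rw [← hσ]; abel
  have := sub_eq_zero.mp this
  exact this

end DNum
namespace DNum

section Const

variable {E : Type*} [NormedAddCommGroup E] [NormedSpace ℝ E]

lemma const_on_dir {s : Set (ℝ × ℝ)} (hs : IsOpen s) (hconv : Convex ℝ s)
    {h : ℝ × ℝ → E} (hdiff : ∀ z ∈ s, DifferentiableAt ℝ h z)
    {d : ℝ × ℝ} (hzero : ∀ z ∈ s, pd d h z = 0)
    {p q : ℝ × ℝ} (hp : p ∈ s) (hq : q ∈ s) {c : ℝ} (hpq : q - p = c • d) :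
    h p = h q := by
  set v : ℝ × ℝ := q - p with hv
  set α : ℝ → ℝ × ℝ := fun τ => p + τ • v with hα
  set φ : ℝ → E := fun τ => h (α τ) with hφ
  set J : Set ℝ := α ⁻¹' s with hJ
  have hαc : Continuous α := by fun_prop
  have hJo : IsOpen J := hs.preimage hαc
  have hJconv : Convex ℝ J := by
    intro τ₁ h₁ τ₂ h₂ a b ha hb hab
    have := hconv h₁ h₂ ha hb hab
    have heq : a • α τ₁ + b • α τ₂ = α (a * τ₁ + b * τ₂) := by
      simp only [hα]
      have : a • (p + τ₁ • v) + b • (p + τ₂ • v) = (a + b) • p + (a * τ₁ + b * τ₂) • v := by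
        module
      rw [this, hab, one_smul]
    rwa [heq] at this
  have hαd : ∀ τ : ℝ, HasDerivAt α v τ := by
    intro τ
    have h := ((hasDerivAt_id τ).smul_const v).const_add p
    rw [one_smul] at h
    exact h
  have hφd : ∀ τ ∈ J, HasDerivAt φ 0 τ := by
    intro τ hτ
    have hmem : α τ ∈ s := hτ
    have hcomp : HasDerivAt φ (fderiv ℝ h (α τ) v) τ :=
      (hdiff (α τ) hmem).hasFDerivAt.comp_hasDerivAt τ (hαd τ)
    have hz : fderiv ℝ h (α τ) v = 0 := by
      have : fderiv ℝ h (α τ) v = pd v h (α τ) := rfl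
      rw [this, show v = c • d from hpq, pd_dir_smul, hzero (α τ) hmem, smul_zero]
    rwa [hz] at hcomp
  have hφ0 : φ 0 = φ 1 := by
    refine Convex.is_const_of_fderivWithin_eq_zero hJconv
      (fun τ hτ => ((hφd τ hτ).differentiableAt).differentiableWithinAt) ?_ ?_ ?_
    · intro τ hτ
      rw [fderivWithin_of_isOpen hJo hτ]
      have := (hφd τ hτ).hasFDerivAt.fderiv
      rw [this]
      ext : 1
      simp
    · show α 0 ∈ s; simp only [hα, zero_smul, add_zero]; exact hp
    · show α 1 ∈ s; simp only [hα, one_smul, hv]; simpa using hq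
  have h0 : φ 0 = h p := by simp only [hφ, hα, zero_smul, add_zero]
  have h1 : φ 1 = h q := by
    simp only [hφ, hα, one_smul, hv]
    norm_num
  rw [← h0, ← h1, hφ0]

end Const

end DNum
namespace DNum

variable {n : ℕ}

/-- Construction of a conjugate harmonic function on a ball. -/
lemma conjugate_exists (U : Set (ℝ × ℝ)) (hU : IsOpen U) (x : ℝ × ℝ → Fin n → ℝ)
    (hx : ContDiffOn ℝ (⊤ : ℕ∞) x U)
    (hwave : ∀ p ∈ U, pd ((1:ℝ),(0:ℝ)) (fun z => pd ((1:ℝ),(0:ℝ)) x z) p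
      = pd ((0:ℝ),(1:ℝ)) (fun z => pd ((0:ℝ),(1:ℝ)) x z) p)
    (t₀ : ℝ × ℝ) (ht₀ : t₀ ∈ U) :
    ∃ r > 0, Metric.ball t₀ r ⊆ U ∧ ∃ y : ℝ × ℝ → Fin n → ℝ,
      ∀ z ∈ Metric.ball t₀ r, DifferentiableAt ℝ y z ∧
        pd ((1:ℝ),(0:ℝ)) y z = pd ((0:ℝ),(1:ℝ)) x z ∧
        pd ((0:ℝ),(1:ℝ)) y z = pd ((1:ℝ),(0:ℝ)) x z := by
  obtain ⟨r, hr, hball⟩ := Metric.isOpen_iff.mp hU t₀ ht₀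
  set B := Metric.ball t₀ r with hB
  have hBo : IsOpen B := Metric.isOpen_ball
  have hBconv : Convex ℝ B := convex_ball t₀ r
  -- differentiability facts
  have hC : ∀ z ∈ U, ContDiffAt ℝ (3 : ℕ) x z := fun z hz =>
    (hx.of_le (by exact WithTop.coe_le_coe.mpr le_top)).contDiffAt (hU.mem_nhds hz)
  have hDu : ∀ z ∈ U, DifferentiableAt ℝ (fun z' => pd ((1:ℝ),(0:ℝ)) x z') z := fun z hz =>
    differentiableAt_pd ((hC z hz).of_le (by norm_cast)) _
  have hDv : ∀ z ∈ U, DifferentiableAt ℝ (fun z' => pd ((0:ℝ),(1:ℝ)) x z') z := fun z hz =>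
    differentiableAt_pd ((hC z hz).of_le (by norm_cast)) _
  set f : ℝ × ℝ → Fin n → ℝ :=
    fun z => (2:ℝ)⁻¹ • (pd ((1:ℝ),(0:ℝ)) x z + pd ((0:ℝ),(1:ℝ)) x z) with hf
  set g : ℝ × ℝ → Fin n → ℝ :=
    fun z => (2:ℝ)⁻¹ • (pd ((1:ℝ),(0:ℝ)) x z - pd ((0:ℝ),(1:ℝ)) x z) with hg
  have hDf : ∀ z ∈ U, DifferentiableAt ℝ f z := fun z hz =>
    (((hDu z hz).fun_add (hDv z hz)).fun_const_smul _)
  have hDg : ∀ z ∈ U, DifferentiableAt ℝ g z := fun z hz =>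
    (((hDu z hz).fun_sub (hDv z hz)).fun_const_smul _)
  -- continuity of f, g on U
  have hfd_cont : ContinuousOn (fderiv ℝ x) U :=
    hx.continuousOn_fderiv_of_isOpen hU (by simp)
  have hcu : ContinuousOn (fun z => pd ((1:ℝ),(0:ℝ)) x z) U :=
    hfd_cont.clm_apply continuousOn_const
  have hcv : ContinuousOn (fun z => pd ((0:ℝ),(1:ℝ)) x z) U :=
    hfd_cont.clm_apply continuousOn_const
  have hfc : ContinuousOn f U := ((hcu.fun_add hcv).fun_const_smul _)
  have hgc : ContinuousOn g U := ((hcu.fun_sub hcv).fun_const_smul _)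
  -- directional derivatives vanish
  have hfdir : ∀ z ∈ U, pd ((1:ℝ),(-1:ℝ)) f z = 0 := by
    intro z hz
    have hA : pd ((1:ℝ),(0:ℝ)) (fun z' => pd ((0:ℝ),(1:ℝ)) x z') z
        = pd ((0:ℝ),(1:ℝ)) (fun z' => pd ((1:ℝ),(0:ℝ)) x z') z :=
      (pd_pd_comm ((hC z hz).of_le (by norm_cast)) _ _)
    have hsplit : ((1:ℝ),(-1:ℝ)) = ((1:ℝ),(0:ℝ)) + (-1 : ℝ) • ((0:ℝ),(1:ℝ)) := by
      norm_num
    rw [hsplit, pd_dir_add (hDf z hz), pd_dir_smul]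
    rw [hf]
    rw [pd_const_smul _ ((hDu z hz).fun_add (hDv z hz)),
        pd_const_smul _ ((hDu z hz).fun_add (hDv z hz)),
        pd_add (hDu z hz) (hDv z hz), pd_add (hDu z hz) (hDv z hz)]
    rw [hwave z hz, hA]
    module
  have hgdir : ∀ z ∈ U, pd ((1:ℝ),(1:ℝ)) g z = 0 := by
    intro z hz
    have hA : pd ((1:ℝ),(0:ℝ)) (fun z' => pd ((0:ℝ),(1:ℝ)) x z') z
        = pd ((0:ℝ),(1:ℝ)) (fun z' => pd ((1:ℝ),(0:ℝ)) x z') z :=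
      (pd_pd_comm ((hC z hz).of_le (by norm_cast)) _ _)
    have hsplit : ((1:ℝ),(1:ℝ)) = ((1:ℝ),(0:ℝ)) + (1 : ℝ) • ((0:ℝ),(1:ℝ)) := by
      norm_num
    rw [hsplit, pd_dir_add (hDg z hz), pd_dir_smul]
    rw [hg]
    rw [pd_const_smul _ ((hDu z hz).fun_sub (hDv z hz)),
        pd_const_smul _ ((hDu z hz).fun_sub (hDv z hz)),
        pd_sub (hDu z hz) (hDv z hz), pd_sub (hDu z hz) (hDv z hz)]
    rw [hwave z hz, hA]
    module
  -- base points and one-variable sections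
  set σ : ℝ := t₀.1 + t₀.2 with hσ
  set δ : ℝ := t₀.1 - t₀.2 with hδ
  set qf : ℝ → ℝ × ℝ := fun s => (t₀.1 + (s - σ)/2, t₀.2 + (s - σ)/2) with hqf
  set qg : ℝ → ℝ × ℝ := fun s => (t₀.1 + (s - δ)/2, t₀.2 - (s - δ)/2) with hqg
  set Iσ : Set ℝ := Set.Ioo (σ - 2*r) (σ + 2*r) with hIσ
  set Iδ : Set ℝ := Set.Ioo (δ - 2*r) (δ + 2*r) with hIδ
  have hqfB : ∀ s ∈ Iσ, qf s ∈ B := by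
    intro s hs
    rw [hB, Metric.mem_ball, Prod.dist_eq]
    rcases hs with ⟨h1, h2⟩
    simp only [hqf, Real.dist_eq]
    rw [sup_lt_iff]
    constructor <;> · rw [abs_lt]; constructor <;> [linarith; linarith]
  have hqgB : ∀ s ∈ Iδ, qg s ∈ B := by
    intro s hs
    rw [hB, Metric.mem_ball, Prod.dist_eq]
    rcases hs with ⟨h1, h2⟩
    simp only [hqg, Real.dist_eq]
    rw [sup_lt_iff]
    constructor <;> · rw [abs_lt]; constructor <;> [linarith; linarith]
  have hmem1 : ∀ z ∈ B, z.1 + z.2 ∈ Iσ := by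
    intro z hz
    rw [hB, Metric.mem_ball, Prod.dist_eq, sup_lt_iff] at hz
    rcases hz with ⟨h1, h2⟩
    rw [Real.dist_eq, abs_lt] at h1 h2
    rw [hIσ, Set.mem_Ioo, hσ]; constructor <;> linarith
  have hmem2 : ∀ z ∈ B, z.1 - z.2 ∈ Iδ := by
    intro z hz
    rw [hB, Metric.mem_ball, Prod.dist_eq, sup_lt_iff] at hz
    rcases hz with ⟨h1, h2⟩
    rw [Real.dist_eq, abs_lt] at h1 h2
    rw [hIδ, Set.mem_Ioo, hδ]; constructor <;> linarith
  set F : ℝ → Fin n → ℝ := fun s => f (qf s) with hF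
  set G : ℝ → Fin n → ℝ := fun s => g (qg s) with hG
  have hqfc : Continuous qf := by fun_prop
  have hqgc : Continuous qg := by fun_prop
  have hFc : ContinuousOn F Iσ :=
    (hfc.mono hball).comp hqfc.continuousOn hqfB
  have hGc : ContinuousOn G Iδ :=
    (hgc.mono hball).comp hqgc.continuousOn hqgB
  have hσI : σ ∈ Iσ := by rw [hIσ, Set.mem_Ioo]; constructor <;> linarith
  have hδI : δ ∈ Iδ := by rw [hIδ, Set.mem_Ioo]; constructor <;> linarith
  have hAd : ∀ t ∈ Iσ, HasDerivAt (fun τ => ∫ s in σ..τ, F s) (F t) t := by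
    intro t ht
    refine intervalIntegral.integral_hasDerivAt_right
      ((hFc.mono (Set.ordConnected_Ioo.uIcc_subset hσI ht)).intervalIntegrable)
      (ContinuousOn.stronglyMeasurableAtFilter isOpen_Ioo hFc t ht) ?_
    exact hFc.continuousAt (Ioo_mem_nhds ht.1 ht.2)
  have hBd : ∀ t ∈ Iδ, HasDerivAt (fun τ => ∫ s in δ..τ, G s) (G t) t := by
    intro t ht
    refine intervalIntegral.integral_hasDerivAt_right
      ((hGc.mono (Set.ordConnected_Ioo.uIcc_subset hδI ht)).intervalIntegrable)
      (ContinuousOn.stronglyMeasurableAtFilter isOpen_Ioo hGc t ht) ?_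
    exact hGc.continuousAt (Ioo_mem_nhds ht.1 ht.2)
  set L₁ : ℝ × ℝ →L[ℝ] ℝ := ContinuousLinearMap.fst ℝ ℝ ℝ + ContinuousLinearMap.snd ℝ ℝ ℝ
    with hL₁
  set L₂ : ℝ × ℝ →L[ℝ] ℝ := ContinuousLinearMap.fst ℝ ℝ ℝ - ContinuousLinearMap.snd ℝ ℝ ℝ
    with hL₂
  set y : ℝ × ℝ → Fin n → ℝ :=
    fun z => (∫ s in σ..(z.1 + z.2), F s) - ∫ s in δ..(z.1 - z.2), G s with hy
  refine ⟨r, hr, hball, y, ?_⟩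
  intro z hz
  -- derivative of y
  have hs₁ : z.1 + z.2 ∈ Iσ := hmem1 z hz
  have hs₂ : z.1 - z.2 ∈ Iδ := hmem2 z hz
  have hyd : HasFDerivAt y
      (((1 : ℝ →L[ℝ] ℝ).smulRight (F (z.1 + z.2))).comp L₁
        - ((1 : ℝ →L[ℝ] ℝ).smulRight (G (z.1 - z.2))).comp L₂) z := by
    have h1 : HasFDerivAt (fun w : ℝ × ℝ => ∫ s in σ..(w.1 + w.2), F s)
        (((1 : ℝ →L[ℝ] ℝ).smulRight (F (z.1 + z.2))).comp L₁) z := by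
      have := ((hAd _ hs₁).hasFDerivAt).comp z (L₁.hasFDerivAt (x := z))
      simpa [hL₁, ContinuousLinearMap.smulRight_one_eq_toSpanSingleton] using this
    have h2 : HasFDerivAt (fun w : ℝ × ℝ => ∫ s in δ..(w.1 - w.2), G s)
        (((1 : ℝ →L[ℝ] ℝ).smulRight (G (z.1 - z.2))).comp L₂) z := by
      have := ((hBd _ hs₂).hasFDerivAt).comp z (L₂.hasFDerivAt (x := z))
      simpa [hL₂, ContinuousLinearMap.smulRight_one_eq_toSpanSingleton] using this
    exact h1.sub h2
  have hDy : DifferentiableAt ℝ y z := hyd.differentiableAt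
  -- constancy along characteristics
  have hFconst : F (z.1 + z.2) = f z := by
    refine const_on_dir hBo hBconv (fun w hw => hDf w (hball hw))
      (d := ((1:ℝ),(-1:ℝ))) (fun w hw => hfdir w (hball hw))
      (hqfB _ hs₁) hz (c := (z.1 - z.2 - δ)/2) ?_
    have : z - qf (z.1 + z.2) = ((z.1 - z.2 - δ)/2) • ((1:ℝ),(-1:ℝ)) := by
      simp only [hqf, hδ, hσ, Prod.ext_iff, Prod.fst_sub, Prod.snd_sub, Prod.smul_mk,
        smul_eq_mul]
      constructor <;> ring
    exact this
  have hGconst : G (z.1 - z.2) = g z := by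
    refine const_on_dir hBo hBconv (fun w hw => hDg w (hball hw))
      (d := ((1:ℝ),(1:ℝ))) (fun w hw => hgdir w (hball hw))
      (hqgB _ hs₂) hz (c := (z.1 + z.2 - σ)/2) ?_
    simp only [hqg, hδ, hσ, Prod.ext_iff, Prod.fst_sub, Prod.snd_sub, Prod.smul_mk,
      smul_eq_mul]
    constructor <;> ring
  have hyu : pd ((1:ℝ),(0:ℝ)) y z = pd ((0:ℝ),(1:ℝ)) x z := by
    have h0 : pd ((1:ℝ),(0:ℝ)) y z = F (z.1 + z.2) - G (z.1 - z.2) := by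
      show fderiv ℝ y z ((1:ℝ),(0:ℝ)) = _
      rw [hyd.fderiv]
      simp [hL₁, hL₂]
    rw [h0, hFconst, hGconst, hf, hg]
    module
  have hyv : pd ((0:ℝ),(1:ℝ)) y z = pd ((1:ℝ),(0:ℝ)) x z := by
    have h0 : pd ((0:ℝ),(1:ℝ)) y z = F (z.1 + z.2) + G (z.1 - z.2) := by
      show fderiv ℝ y z ((0:ℝ),(1:ℝ)) = _
      rw [hyd.fderiv]
      simp [hL₁, hL₂]
    rw [h0, hFconst, hGconst, hf, hg]
    module
  exact ⟨hDy, hyu, hyv⟩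

end DNum
namespace DNum

variable {n : ℕ}

lemma part1 (n : ℕ) (U : Set (ℝ × ℝ)) (hU : IsOpen U) (Ψ : ℝ × ℝ → Fin n → DNum)
    (hΨ : ContDiffOn ℝ (⊤ : ℕ∞) Ψ U)
    (hol : ∀ p ∈ U, dbarV Ψ p = 0)
    (hnull : ∀ p ∈ U, minkD (pu Ψ p) (pu Ψ p) = 0)
    (hneg : ∀ p ∈ U, normSqV (pu Ψ p) < 0)
    (p : ℝ × ℝ) (hp : p ∈ U) :
    Isoth (fun z i => re (Ψ z i)) p ∧ Hmean (fun z i => re (Ψ z i)) p = 0 := by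
  set x : ℝ × ℝ → Fin n → ℝ := fun z i => re (Ψ z i) with hxdef
  have hxrw : x = fun z => reV (Ψ z) := by
    funext z; rw [reV_apply]
  have hC : ∀ z ∈ U, ContDiffAt ℝ (3 : ℕ) Ψ z := fun z hz =>
    (hΨ.of_le (by exact WithTop.coe_le_coe.mpr le_top)).contDiffAt (hU.mem_nhds hz)
  have hD : ∀ z ∈ U, DifferentiableAt ℝ Ψ z := fun z hz =>
    (hC z hz).differentiableAt (by norm_cast)
  -- holomorphy relation
  have hjrel : ∀ z ∈ U, pd ((0:ℝ),(1:ℝ)) Ψ z = jV (pd ((1:ℝ),(0:ℝ)) Ψ z) := by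
    intro z hz
    funext i
    have h0 := congrFun (hol z hz) i
    unfold dbarV dbar at h0
    have h1 : pu (fun w => Ψ w i) z - j * pv (fun w => Ψ w i) z = 0 := by
      have := congrArg (fun w => (2:ℝ) • w) h0
      simpa [smul_smul] using this
    have h2 : pu (fun w => Ψ w i) z = j * pv (fun w => Ψ w i) z := by
      linear_combination (norm := module) h1
    have h3 : j * pu (fun w => Ψ w i) z = pv (fun w => Ψ w i) z := by
      rw [h2, j_mul_j_mul]
    rw [jV_apply]
    have hpv : pv (fun w => Ψ w i) z = pd ((0:ℝ),(1:ℝ)) Ψ z i := pd_eval (hD z hz) _ i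
    have hpu : pu (fun w => Ψ w i) z = pd ((1:ℝ),(0:ℝ)) Ψ z i := pd_eval (hD z hz) _ i
    rw [← hpv, ← h3, hpu]
  have hxu : ∀ z ∈ U, pd ((1:ℝ),(0:ℝ)) x z = reV (pd ((1:ℝ),(0:ℝ)) Ψ z) := by
    intro z hz; rw [hxrw]; exact pd_clm reV (hD z hz) _
  have hxv : ∀ z ∈ U, pd ((0:ℝ),(1:ℝ)) x z = imV (pd ((1:ℝ),(0:ℝ)) Ψ z) := by
    intro z hz
    rw [hxrw, pd_clm reV (hD z hz), hjrel z hz, reV_jV]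
  set A : Fin n → DNum := pd ((1:ℝ),(0:ℝ)) Ψ p with hA
  set a : Fin n → ℝ := fun i => (A i).1 with ha
  set b : Fin n → ℝ := fun i => (A i).2 with hb
  have hpuA : pu Ψ p = A := rfl
  have hnull' := hnull p hp
  rw [hpuA, minkD_comps, Prod.ext_iff] at hnull'
  have haa : mink a a = 0 := hnull'.1
  have hbb : mink b b = 0 := hnull'.2
  have hab : mink a b < 0 := by
    have := hneg p hp
    rwa [hpuA, normSqV_eq] at this
  -- component formulas for xu, xv
  have hxuc : xu x p = fun i => 2⁻¹ * a i + 2⁻¹ * b i := by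
    show pd ((1:ℝ),(0:ℝ)) x p = _
    rw [hxu p hp, reV_apply]
    funext i; rw [re]; ring
  have hxvc : xv x p = fun i => (-2⁻¹) * a i + 2⁻¹ * b i := by
    show pd ((0:ℝ),(1:ℝ)) x p = _
    rw [hxv p hp, imV_apply]
    funext i; rw [im]; ring
  have hE : Efun x p = mink a b / 2 := by
    unfold Efun
    rw [hxuc, mink_lin, haa, hbb, mink_comm b a]; ring
  have hG : Gfun x p = - (mink a b / 2) := by
    unfold Gfun
    rw [hxvc, mink_lin, haa, hbb, mink_comm b a]; ring
  have hF : Ffun x p = 0 := by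
    unfold Ffun
    rw [hxuc, hxvc, mink_lin, haa, hbb, mink_comm b a]; ring
  have hiso : Isoth x p := by
    refine ⟨by rw [hE]; linarith, by rw [hG, hE], hF⟩
  refine ⟨hiso, ?_⟩
  -- second derivative equality
  have hC2 : ContDiffAt ℝ (2 : ℕ) Ψ p := (hC p hp).of_le (by norm_cast)
  have hDpu : DifferentiableAt ℝ (fun z => pd ((1:ℝ),(0:ℝ)) Ψ z) p :=
    differentiableAt_pd hC2 _
  have hevu : (fun z => pd ((1:ℝ),(0:ℝ)) x z) =ᶠ[nhds p]
      (fun z => reV (pd ((1:ℝ),(0:ℝ)) Ψ z)) :=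
    Filter.eventuallyEq_of_mem (hU.mem_nhds hp) hxu
  have hevv : (fun z => pd ((0:ℝ),(1:ℝ)) x z) =ᶠ[nhds p]
      (fun z => imV (pd ((1:ℝ),(0:ℝ)) Ψ z)) :=
    Filter.eventuallyEq_of_mem (hU.mem_nhds hp) hxv
  have hevj : (fun z => pd ((0:ℝ),(1:ℝ)) Ψ z) =ᶠ[nhds p]
      (fun z => jV (pd ((1:ℝ),(0:ℝ)) Ψ z)) :=
    Filter.eventuallyEq_of_mem (hU.mem_nhds hp) hjrel
  have key : pu (xu x) p = pv (xv x) p := by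
    show pd ((1:ℝ),(0:ℝ)) (fun z => pd ((1:ℝ),(0:ℝ)) x z) p
      = pd ((0:ℝ),(1:ℝ)) (fun z => pd ((0:ℝ),(1:ℝ)) x z) p
    rw [pd_congr hevu, pd_congr hevv, pd_clm reV hDpu, pd_clm imV hDpu]
    have hswap : pd ((0:ℝ),(1:ℝ)) (fun z => pd ((1:ℝ),(0:ℝ)) Ψ z) p
        = pd ((1:ℝ),(0:ℝ)) (fun z => pd ((0:ℝ),(1:ℝ)) Ψ z) p :=
      (pd_pd_comm hC2 _ _).symm
    rw [hswap, pd_congr hevj, pd_clm jV hDpu, imV_jV]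
  unfold Hmean sUU sVV
  rw [key, sub_self, smul_zero]

end DNum
namespace DNum

variable {n : ℕ}

set_option maxHeartbeats 1000000 in
lemma part2 (U : Set (ℝ × ℝ)) (hU : IsOpen U) (x : ℝ × ℝ → Fin n → ℝ)
    (hx : ContDiffOn ℝ (⊤ : ℕ∞) x U) (hiso : ∀ p ∈ U, Isoth x p) (hmin : ∀ p ∈ U, Hmean x p = 0)
    (t₀ : ℝ × ℝ) (ht₀ : t₀ ∈ U) :
    ∃ U₀ : Set (ℝ × ℝ), U₀ ⊆ U ∧ IsOpen U₀ ∧ t₀ ∈ U₀ ∧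
      ∃ Ψ : ℝ × ℝ → Fin n → DNum,
        (∀ p ∈ U₀, dbarV Ψ p = 0) ∧
        (∀ p ∈ U₀, minkD (pu Ψ p) (pu Ψ p) = 0) ∧
        (∀ p ∈ U₀, normSqV (pu Ψ p) < 0) ∧
        (∀ p ∈ U₀, x p = fun i => re (Ψ p i)) := by
  obtain ⟨r, hr, hball, y, hy⟩ :=
    conjugate_exists U hU x hx (wave_eq U hU x hx hiso hmin) t₀ ht₀
  set B := Metric.ball t₀ r with hBdef
  set P : ((Fin n → ℝ) × (Fin n → ℝ)) →L[ℝ] (Fin n → DNum) :=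
    ContinuousLinearMap.pi (fun i : Fin n =>
      (((ContinuousLinearMap.proj (R := ℝ) (φ := fun _ : Fin n => ℝ) i).comp
          (ContinuousLinearMap.fst ℝ (Fin n → ℝ) (Fin n → ℝ))
        - (ContinuousLinearMap.proj (R := ℝ) (φ := fun _ : Fin n => ℝ) i).comp
          (ContinuousLinearMap.snd ℝ (Fin n → ℝ) (Fin n → ℝ))).prod
       ((ContinuousLinearMap.proj (R := ℝ) (φ := fun _ : Fin n => ℝ) i).comp
          (ContinuousLinearMap.fst ℝ (Fin n → ℝ) (Fin n → ℝ))
        + (ContinuousLinearMap.proj (R := ℝ) (φ := fun _ : Fin n => ℝ) i).comp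
          (ContinuousLinearMap.snd ℝ (Fin n → ℝ) (Fin n → ℝ))))) with hP
  have hPapp : ∀ (a b : Fin n → ℝ) (i : Fin n), P (a, b) i = (a i - b i, a i + b i) := by
    intro a b i
    simp [hP]
  set Ψ : ℝ × ℝ → Fin n → DNum := fun z => P ((fun z' => (x z', y z')) z) with hΨdef
  -- pointwise facts
  have main : ∀ p ∈ B, dbarV Ψ p = 0 ∧ minkD (pu Ψ p) (pu Ψ p) = 0 ∧
      normSqV (pu Ψ p) < 0 ∧ x p = fun i => re (Ψ p i) := by
    intro p hp
    have hpU : p ∈ U := hball hp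
    have hDx : DifferentiableAt ℝ x p :=
      ((hx.of_le (by exact WithTop.coe_le_coe.mpr le_top)).contDiffAt (hU.mem_nhds hpU)).differentiableAt
        (n := (3:ℕ)) (by norm_cast)
    obtain ⟨hDy, hyu, hyv⟩ := hy p hp
    have hDxy : DifferentiableAt ℝ (fun z' => (x z', y z')) p := hDx.prodMk hDy
    have hDΨ : DifferentiableAt ℝ Ψ p :=
      (P.hasFDerivAt.comp p hDxy.hasFDerivAt).differentiableAt
    have hpd : ∀ w : ℝ × ℝ, pd w Ψ p = P (pd w x p, pd w y p) := by
      intro w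
      rw [hΨdef, pd_clm P hDxy w, pd_prod hDx hDy]
    set Xu : Fin n → ℝ := pd ((1:ℝ),(0:ℝ)) x p with hXu
    set Xv : Fin n → ℝ := pd ((0:ℝ),(1:ℝ)) x p with hXv
    have hcu : ∀ i, pd ((1:ℝ),(0:ℝ)) Ψ p i = (Xu i - Xv i, Xu i + Xv i) := by
      intro i
      rw [hpd, hyu, hPapp]
    have hcv : ∀ i, pd ((0:ℝ),(1:ℝ)) Ψ p i = (Xv i - Xu i, Xv i + Xu i) := by
      intro i
      rw [hpd, hyv, hPapp]
    have hI := hiso p hpU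
    have hE : Efun x p < 0 := hI.1
    have hEmink : Efun x p = mink Xu Xu := rfl
    have hGmink : Gfun x p = mink Xv Xv := rfl
    have hFmink : Ffun x p = mink Xu Xv := rfl
    have hGE : mink Xv Xv = - mink Xu Xu := by
      rw [← hEmink, ← hGmink]; exact hI.2.1
    have hF0 : mink Xu Xv = 0 := by rw [← hFmink]; exact hI.2.2
    have hF0' : mink Xv Xu = 0 := by rw [mink_comm]; exact hF0
    have hcu1 : (fun i => (pu Ψ p i).1) = fun i => 1 * Xu i + (-1) * Xv i := by
      funext i
      rw [show pu Ψ p i = pd ((1:ℝ),(0:ℝ)) Ψ p i from rfl, hcu i]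
      show Xu i - Xv i = 1 * Xu i + (-1) * Xv i
      ring
    have hcu2 : (fun i => (pu Ψ p i).2) = fun i => 1 * Xu i + (1:ℝ) * Xv i := by
      funext i
      rw [show pu Ψ p i = pd ((1:ℝ),(0:ℝ)) Ψ p i from rfl, hcu i]
      show Xu i + Xv i = 1 * Xu i + 1 * Xv i
      ring
    refine ⟨?_, ?_, ?_, ?_⟩
    · -- dbarV
      funext i
      show dbar (fun z => Ψ z i) p = 0
      unfold dbar
      have h1 : pu (fun z => Ψ z i) p = pd ((1:ℝ),(0:ℝ)) Ψ p i := pd_eval hDΨ _ i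
      have h2 : pv (fun z => Ψ z i) p = pd ((0:ℝ),(1:ℝ)) Ψ p i := pd_eval hDΨ _ i
      rw [h1, h2, hcu i, hcv i, j_mul]
      have hsub : ((Xu i - Xv i, Xu i + Xv i) : DNum) - (-(Xv i - Xu i), Xv i + Xu i) = 0 := by
        rw [Prod.ext_iff]
        constructor
        · show Xu i - Xv i - -(Xv i - Xu i) = 0; ring
        · show Xu i + Xv i - (Xv i + Xu i) = 0; ring
      rw [hsub, smul_zero]
    · -- minkD
      have hm1 : mink (fun i => (pu Ψ p i).1) (fun i => (pu Ψ p i).1) = 0 := by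
        rw [hcu1, mink_lin, hGE, hF0, hF0']; ring
      have hm2 : mink (fun i => (pu Ψ p i).2) (fun i => (pu Ψ p i).2) = 0 := by
        rw [hcu2, mink_lin, hGE, hF0, hF0']; ring
      rw [minkD_comps, Prod.ext_iff]
      exact ⟨hm1, hm2⟩
    · -- normSqV
      rw [normSqV_eq, hcu1, hcu2, mink_lin, hGE, hF0, hF0']
      rw [hEmink] at hE
      nlinarith
    · -- real part
      funext i
      rw [hΨdef]
      show x p i = re (P (x p, y p) i)
      rw [hPapp, re]
      ring
  exact ⟨B, hball, Metric.isOpen_ball, Metric.mem_ball_self hr, Ψ,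
    fun p hp => (main p hp).1, fun p hp => (main p hp).2.1,
    fun p hp => (main p hp).2.2.1, fun p hp => (main p hp).2.2.2⟩

end DNum


open DNum

/-- Weierstrass-type representation: if `Ψ` is `D`-holomorphic with `Ψ′² = 0`
and `‖Ψ′‖² < 0`, then `x = Re Ψ` is a minimal time-like surface in isothermal
coordinates; conversely every minimal time-like surface arises locally this way. -/
theorem stmt12 (n : ℕ) :
    (∀ U : Set (ℝ × ℝ), IsOpen U → ∀ Ψ : ℝ × ℝ → Fin n → DNum,
      ContDiffOn ℝ (⊤ : ℕ∞) Ψ U →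
      (∀ p ∈ U, dbarV Ψ p = 0) →
      (∀ p ∈ U, minkD (pu Ψ p) (pu Ψ p) = 0) →
      (∀ p ∈ U, normSqV (pu Ψ p) < 0) →
      ∀ p ∈ U, Isoth (fun z i => re (Ψ z i)) p ∧ Hmean (fun z i => re (Ψ z i)) p = 0) ∧
    (∀ U : Set (ℝ × ℝ), IsOpen U → ∀ x : ℝ × ℝ → Fin n → ℝ,
      ContDiffOn ℝ (⊤ : ℕ∞) x U →
      (∀ p ∈ U, Isoth x p) → (∀ p ∈ U, Hmean x p = 0) →
      ∀ t₀ ∈ U, ∃ U₀ : Set (ℝ × ℝ), U₀ ⊆ U ∧ IsOpen U₀ ∧ t₀ ∈ U₀ ∧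
        ∃ Ψ : ℝ × ℝ → Fin n → DNum,
          (∀ p ∈ U₀, dbarV Ψ p = 0) ∧
          (∀ p ∈ U₀, minkD (pu Ψ p) (pu Ψ p) = 0) ∧
          (∀ p ∈ U₀, normSqV (pu Ψ p) < 0) ∧
          (∀ p ∈ U₀, x p = fun i => re (Ψ p i))) := by
  constructor
  · intro U hU Ψ hΨ hol hnull hneg p hp
    exact part1 n U hU Ψ hΨ hol hnull hneg p hp
  · intro U hU x hx hiso hmin t₀ ht₀
    exact part2 U hU x hx hiso hmin t₀ ht₀
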